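/- The intervals I⁺_{k,l} := [2^k − 2^l, 2^k − 2^{l−1}) for k, l ∈ ℤ with k > l are pairwise disjoint, and likewise the intervals I⁻_{k,l} := [−2^k + 2^{l−1}, −2^k + 2^l) are pairwise disjoint and disjoint from all I⁺_{k,l}. -/
import Mathlib


open Real Set

private lemma zle {a b : ℤ} (h : a ≤ b) : (2:ℝ)^a ≤ (2:ℝ)^b :=
  zpow_le_zpow_right₀ one_le_two h

private lemma zpos (a : ℤ) : (0:ℝ) < (2:ℝ)^a := zpow_pos two_pos a

/-- If x lies in [2^a, 2^{a+1}) and in [2^b, 2^{b+1}), then a = b. -/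
private lemma keyIco {a b : ℤ} {x : ℝ} (ha1 : (2:ℝ)^a ≤ x) (ha2 : x < (2:ℝ)^(a+1))
    (hb1 : (2:ℝ)^b ≤ x) (hb2 : x < (2:ℝ)^(b+1)) : a = b := by
  rcases lt_trichotomy a b with h | h | h
  · exact absurd (le_trans (zle (by omega)) hb1) (not_le.mpr ha2)
  · exact h
  · exact absurd (le_trans (zle (by omega)) ha1) (not_le.mpr hb2)

/-- If x lies in (2^a, 2^{a+1}] and in (2^b, 2^{b+1}], then a = b. -/
private lemma keyIoc {a b : ℤ} {x : ℝ} (ha1 : (2:ℝ)^a < x) (ha2 : x ≤ (2:ℝ)^(a+1))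
    (hb1 : (2:ℝ)^b < x) (hb2 : x ≤ (2:ℝ)^(b+1)) : a = b := by
  rcases lt_trichotomy a b with h | h | h
  · exact absurd (lt_of_le_of_lt (zle (by omega)) hb1) (not_lt.mpr ha2)
  · exact h
  · exact absurd (lt_of_le_of_lt (zle (by omega)) ha1) (not_lt.mpr hb2)

private lemma twice (a : ℤ) : (2:ℝ)^(a+1) = (2:ℝ)^a + (2:ℝ)^a := by
  rw [zpow_add₀ (two_ne_zero (α := ℝ))]; ring

/-- `I⁺_{k,l} = [2^k - 2^l, 2^k - 2^{l-1})`. -/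
def Iplus (k l : ℤ) : Set ℝ := Set.Ico ((2:ℝ)^k - (2:ℝ)^l) ((2:ℝ)^k - (2:ℝ)^(l-1))

/-- `I⁻_{k,l} = [-2^k + 2^{l-1}, -2^k + 2^l)`. -/
def Iminus (k l : ℤ) : Set ℝ := Set.Ico (-(2:ℝ)^k + (2:ℝ)^(l-1)) (-(2:ℝ)^k + (2:ℝ)^l)

private lemma plusEq {k l k' l' : ℤ} (hkl : l < k) (hkl' : l' < k') {x : ℝ}
    (hx : x ∈ Iplus k l) (hx' : x ∈ Iplus k' l') : (k, l) = (k', l') := by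
  obtain ⟨h1, h2⟩ := hx
  obtain ⟨h1', h2'⟩ := hx'
  -- x ∈ [2^{k-1}, 2^k)
  have hk : k = k' := by
    have e : ∀ m n : ℤ, n < m → ∀ y : ℝ, (2:ℝ)^m - (2:ℝ)^n ≤ y → y < (2:ℝ)^m - (2:ℝ)^(n-1) →
        (2:ℝ)^(m-1) ≤ y ∧ y < (2:ℝ)^(m-1+1) := by
      intro m n hnm y hy1 hy2
      constructor
      · have : (2:ℝ)^n ≤ (2:ℝ)^(m-1) := zle (by omega)
        have := twice (m-1)
        simp only [sub_add_cancel] at this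
        linarith
      · have := zpos (n-1)
        have : (2:ℝ)^(m-1+1) = (2:ℝ)^m := by ring_nf
        linarith [zpos (n-1)]
    obtain ⟨a1, a2⟩ := e k l hkl x h1 h2
    obtain ⟨b1, b2⟩ := e k' l' hkl' x h1' h2'
    have := keyIco a1 a2 b1 b2
    omega
  subst hk
  -- 2^k - x ∈ (2^{l-1}, 2^l]
  have hl : l = l' := by
    have := keyIoc (a := l - 1) (b := l' - 1) (x := (2:ℝ)^k - x)
      (by linarith) (by simpa using (by linarith : (2:ℝ)^k - x ≤ (2:ℝ)^l))
      (by linarith) (by simpa using (by linarith : (2:ℝ)^k - x ≤ (2:ℝ)^l'))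
    omega
  rw [hl]

private lemma minusEq {k l k' l' : ℤ} (hkl : l < k) (hkl' : l' < k') {x : ℝ}
    (hx : x ∈ Iminus k l) (hx' : x ∈ Iminus k' l') : (k, l) = (k', l') := by
  obtain ⟨h1, h2⟩ := hx
  obtain ⟨h1', h2'⟩ := hx'
  -- -x ∈ (2^{k-1}, 2^k]
  have hk : k = k' := by
    have e : ∀ m n : ℤ, n < m → ∀ y : ℝ, -(2:ℝ)^m + (2:ℝ)^(n-1) ≤ y → y < -(2:ℝ)^m + (2:ℝ)^n →
        (2:ℝ)^(m-1) < -y ∧ -y ≤ (2:ℝ)^(m-1+1) := by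
      intro m n hnm y hy1 hy2
      have hmm : (2:ℝ)^(m-1+1) = (2:ℝ)^m := by ring_nf
      constructor
      · have : (2:ℝ)^n ≤ (2:ℝ)^(m-1) := zle (by omega)
        have := twice (m-1)
        simp only [sub_add_cancel] at this
        linarith
      · have := zpos (n-1)
        linarith
    obtain ⟨a1, a2⟩ := e k l hkl x h1 h2
    obtain ⟨b1, b2⟩ := e k' l' hkl' x h1' h2'
    have := keyIoc a1 a2 b1 b2
    omega
  subst hk
  -- 2^k + x ∈ [2^{l-1}, 2^l)
  have hl : l = l' := by
    have := keyIco (a := l - 1) (b := l' - 1) (x := (2:ℝ)^k + x)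
      (by linarith) (by simpa using (by linarith : (2:ℝ)^k + x < (2:ℝ)^l))
      (by linarith) (by simpa using (by linarith : (2:ℝ)^k + x < (2:ℝ)^l'))
    omega
  rw [hl]

/-- the intervals `I⁺_{k,l}` (for `k > l`) are pairwise disjoint,
the intervals `I⁻_{k,l}` (for `k > l`) are pairwise disjoint, and every
`I⁺_{k,l}` is disjoint from every `I⁻_{k',l'}`. -/
theorem stmt5 :
    (∀ k l k' l' : ℤ, l < k → l' < k' → (k, l) ≠ (k', l') →
        Disjoint (Iplus k l) (Iplus k' l')) ∧
    (∀ k l k' l' : ℤ, l < k → l' < k' → (k, l) ≠ (k', l') →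
        Disjoint (Iminus k l) (Iminus k' l')) ∧
    (∀ k l k' l' : ℤ, l < k → l' < k' →
        Disjoint (Iplus k l) (Iminus k' l')) := by
  refine ⟨?_, ?_, ?_⟩
  · intro k l k' l' h h' hne
    rw [Set.disjoint_left]
    intro x hx hx'
    exact hne (plusEq h h' hx hx')
  · intro k l k' l' h h' hne
    rw [Set.disjoint_left]
    intro x hx hx'
    exact hne (minusEq h h' hx hx')
  · intro k l k' l' h h'
    rw [Set.disjoint_left]
    intro x hx hx'
    obtain ⟨h1, _⟩ := hx
    obtain ⟨_, h2⟩ := hx'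
    have hl : (2:ℝ)^l ≤ (2:ℝ)^(k-1) := zle (by omega)
    have hl' : (2:ℝ)^l' ≤ (2:ℝ)^(k'-1) := zle (by omega)
    have hk := twice (k-1); simp only [sub_add_cancel] at hk
    have hk' := twice (k'-1); simp only [sub_add_cancel] at hk'
    have := zpos (k-1)
    have := zpos (k'-1)
    linarith
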